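/- Fix an integer n ≥ 1, let H = ℍ[ℚ; −11, −11(11n − 1)], let ‡ be the ℚ-linear involution of H given by (x + y·i + z·j + w·ij)‡ = x + y·i + z·j − w·ij, let O be the ℤ-submodule of H spanned by 1, (1 + i)/2, (i + j)/11, (11j + ij)/22 (a subring of H with O‡ = O), let O⁺ = {x ∈ O : x‡ = x}, and let 𝒲 be the subgroup of invertible 2×2 matrices over H generated by the Cohn matrices W(α), α ∈ O⁺. Then for every γ = [[a, b], [c, d]] ∈ 𝒲, setting κ = c·j·conj(d) − d·j·conj(c), κ' = a·j·conj(b) − b·j·conj(a) (both of which are scalar), and ξ = a·j·conj(d) − b·j·conj(c), the rational number B := (1/2)·(−22·κ' − 66·κ + tr((−10i + j)·conj(ξ))) satisfies B ∈ 11(11n − 1) + 22(11n − 1)ℤ; in particular |B| ≥ 11(11n − 1). -/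

import Mathlib

open Quaternion
open scoped Quaternion

/-- The Cohn matrix `W(α) = [[α, 1], [−1, 0]]` as an invertible 2×2 matrix over a ring,
with inverse `[[0, −1], [1, α]]`. -/
def CohnUnit {A : Type*} [Ring A] (α : A) : (Matrix (Fin 2) (Fin 2) A)ˣ where
  val := !![α, 1; -1, 0]
  inv := !![0, -1; 1, α]
  val_inv := by
    ext i j
    fin_cases i <;> fin_cases j <;>
      simp [Matrix.mul_apply, Fin.sum_univ_succ, Matrix.one_apply]
  inv_val := by
    ext i j
    fin_cases i <;> fin_cases j <;>
      simp [Matrix.mul_apply, Fin.sum_univ_succ, Matrix.one_apply]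

/-- The orthogonal involution `‡ : x + yi + zj + wij ↦ x + yi + zj − wij`. -/
def dag {c₁ c₂ : ℚ} (q : ℍ[ℚ, c₁, c₂]) : ℍ[ℚ, c₁, c₂] :=
  ⟨q.re, q.imI, q.imJ, -q.imK⟩

/-- The `‡`-order `ℤ ⊕ ℤ(1+i)/2 ⊕ ℤ(i+j)/11 ⊕ ℤ(11j+ij)/22` of
`ℍ[ℚ; −11, −11(11n−1)]`. -/
noncomputable def order (n : ℕ) : Submodule ℤ ℍ[ℚ, -11, -11 * (11 * (n : ℚ) - 1)] :=
  Submodule.span ℤ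
    ({1, ⟨1 / 2, 1 / 2, 0, 0⟩, ⟨0, 1 / 11, 1 / 11, 0⟩, ⟨0, 0, 1 / 2, 1 / 22⟩} :
      Set ℍ[ℚ, -11, -11 * (11 * (n : ℚ) - 1)])

/-- `O⁺`: the `‡`-symmetric part of the order, which equals the `ℤ`-span of
`1, (1+i)/2, (i+j)/11`. -/
noncomputable def orderPlus (n : ℕ) :
    Submodule ℤ ℍ[ℚ, -11, -11 * (11 * (n : ℚ) - 1)] :=
  Submodule.span ℤ
    ({1, ⟨1 / 2, 1 / 2, 0, 0⟩, ⟨0, 1 / 11, 1 / 11, 0⟩} :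
      Set ℍ[ℚ, -11, -11 * (11 * (n : ℚ) - 1)])

/-- `𝒲`: the subgroup of invertible 2×2 matrices generated by the Cohn matrices `W(α)`,
`α ∈ O⁺`. -/
noncomputable def CohnSubgroup (n : ℕ) :
    Subgroup (Matrix (Fin 2) (Fin 2) ℍ[ℚ, -11, -11 * (11 * (n : ℚ) - 1)])ˣ :=
  Subgroup.closure {γ | ∃ α ∈ orderPlus n, γ = CohnUnit α}

/-!
Put `Ω = jForm j = [[0, j], [−j, 0]]`. For `γ = [[a, b], [c, d]]` the Hermitian matrix `γ Ω γᴴ` has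
first row `κ', ξ` and lower right entry `κ`, and `(Wγ) Ω (Wγ)ᴴ = W (γ Ω γᴴ) Wᴴ`. With
`T = 11n − 1`, the Hermitian matrices whose diagonal lies in `2Tℤ` and whose upper right entry
lies in `j + 2T·O⁺` contain `Ω` and are stable under conjugation by every `W(α)`, `α ∈ O⁺`:
norms and traces of products in `O⁺` are integers and `tr(α j) ∈ 2Tℤ`. As
`W(α)⁻¹ = W(0) W(−α) W(0)`, they are stable under all of `𝒲`. Finally
`tr((−10i + j)·conj(j)) = 22T` and `tr((−10i + j)·conj(y)) ∈ 22ℤ` for `y ∈ O⁺`, which puts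
`B` in `11T + 22Tℤ`.
-/

section CohnConjugation

open Matrix

variable {R : Type*} [Ring R]

lemma cohnUnit_inv (α : R) : (CohnUnit α)⁻¹ = CohnUnit 0 * CohnUnit (-α) * CohnUnit 0 := by
  ext i k
  fin_cases i <;> fin_cases k <;> simp [CohnUnit, Matrix.mul_apply, Fin.sum_univ_two]

variable [StarRing R]

def jForm (J : R) : Matrix (Fin 2) (Fin 2) R := !![0, J; -J, 0]

lemma mul_jForm_mul_conjTranspose_apply (J : R) (M : Matrix (Fin 2) (Fin 2) R) (i k : Fin 2) :
    (M * jForm J * Mᴴ) i k = M i 0 * J * star (M k 1) - M i 1 * J * star (M k 0) := by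
  simp [jForm, Matrix.mul_apply, Fin.sum_univ_two]
  abel

lemma isHermitian_jForm {J : R} (hJ : star J = -J) : (jForm J).IsHermitian := by
  ext i k
  fin_cases i <;> fin_cases k <;> simp [jForm, hJ]

lemma cohnUnit_conjTranspose (α : R) :
    (CohnUnit α : Matrix (Fin 2) (Fin 2) R)ᴴ = !![star α, -1; 1, 0] := by
  ext i k
  fin_cases i <;> fin_cases k <;> simp [CohnUnit]

lemma cohnUnit_mul_mul_conjTranspose (α : R) (G : Matrix (Fin 2) (Fin 2) R) :
    (CohnUnit α : Matrix (Fin 2) (Fin 2) R) * G * (CohnUnit α : Matrix (Fin 2) (Fin 2) R)ᴴ =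
      !![α * G 0 0 * star α + α * G 0 1 + G 1 0 * star α + G 1 1, -(α * G 0 0 + G 1 0);
        -(G 0 0 * star α + G 0 1), G 0 0] := by
  rw [cohnUnit_conjTranspose, eta_fin_two G]
  simp only [CohnUnit, mul_fin_two]
  ext i k
  fin_cases i <;> fin_cases k <;> simp [add_mul, mul_assoc] <;> abel

end CohnConjugation

local notation "𝓗" n => ℍ[ℚ, -11, -11 * (11 * ((n : ℕ) : ℚ) - 1)]

local notation "𝓜" n => Matrix (Fin 2) (Fin 2) (𝓗 n)

lemma QuaternionAlgebra.eq_coe_iff {R : Type*} [CommRing R] {c₁ c₂ c₃ : R}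
    {a : ℍ[R, c₁, c₂, c₃]} {r : R} : a = r ↔ a.re = r ∧ a.imI = 0 ∧ a.imJ = 0 ∧ a.imK = 0 := by
  simp [QuaternionAlgebra.ext_iff]

section OrderPlus

variable {n : ℕ}

lemma mem_orderPlus_iff {α : 𝓗 n} :
    α ∈ orderPlus n ↔ ∃ u v w : ℤ, α = ⟨u + v / 2, v / 2 + w / 11, w / 11, 0⟩ := by
  simp only [orderPlus, Submodule.mem_span_insert, Submodule.mem_span_singleton]
  constructor
  · rintro ⟨u, _, ⟨v, _, ⟨w, rfl⟩, rfl⟩, rfl⟩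
    exact ⟨u, v, w, by ext <;> simp <;> ring⟩
  · rintro ⟨u, v, w, rfl⟩
    exact ⟨u, _, ⟨v, _, ⟨w, rfl⟩, rfl⟩, by ext <;> simp <;> ring⟩

lemma star_mem_orderPlus {α : 𝓗 n} (hα : α ∈ orderPlus n) : star α ∈ orderPlus n := by
  obtain ⟨u, v, w, rfl⟩ := mem_orderPlus_iff.1 hα
  exact mem_orderPlus_iff.2 ⟨u + v, -v, -w, by ext <;> simp <;> ring⟩

lemma exists_mul_star_eq_intCast {α : 𝓗 n} (hα : α ∈ orderPlus n) :
    ∃ k : ℤ, α * star α = ((k : ℚ) : 𝓗 n) := by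
  obtain ⟨u, v, w, rfl⟩ := mem_orderPlus_iff.1 hα
  exact ⟨u ^ 2 + u * v + 3 * v ^ 2 + v * w + n * w ^ 2, by
    rw [QuaternionAlgebra.eq_coe_iff]; refine ⟨?_, ?_, ?_, ?_⟩ <;> simp <;> ring⟩

lemma exists_trace_mul_eq_intCast {α β : 𝓗 n} (hα : α ∈ orderPlus n) (hβ : β ∈ orderPlus n) :
    ∃ k : ℤ, α * β + star (α * β) = ((k : ℚ) : 𝓗 n) := by
  obtain ⟨u, v, w, rfl⟩ := mem_orderPlus_iff.1 hα
  obtain ⟨u', v', w', rfl⟩ := mem_orderPlus_iff.1 hβ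
  exact ⟨2 * u * u' + u * v' + u' * v - 5 * v * v' - v * w' - v' * w - 2 * n * w * w',
    by rw [QuaternionAlgebra.eq_coe_iff]; simp; ring⟩

lemma exists_trace_mul_j_eq {α : 𝓗 n} (hα : α ∈ orderPlus n) :
    ∃ k : ℤ, α * ⟨0, 0, 1, 0⟩ + star (α * ⟨0, 0, 1, 0⟩) = ((2 * (11 * n - 1) * k : ℚ) : 𝓗 n) := by
  obtain ⟨u, v, w, rfl⟩ := mem_orderPlus_iff.1 hα
  exact ⟨-w, by rw [QuaternionAlgebra.eq_coe_iff]; simp; ring⟩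

lemma exists_trace_mul_star_j_add_smul_eq {y : 𝓗 n} (hy : y ∈ orderPlus n) :
    ∃ k : ℤ, ⟨0, -10, 1, 0⟩ * star (⟨0, 0, 1, 0⟩ + (2 * (11 * n - 1) : ℚ) • y) +
        star (⟨0, -10, 1, 0⟩ * star (⟨0, 0, 1, 0⟩ + (2 * (11 * n - 1) : ℚ) • y)) =
      ((22 * (11 * n - 1) * (2 * k + 1) : ℚ) : 𝓗 n) := by
  obtain ⟨u, v, w, rfl⟩ := mem_orderPlus_iff.1 hy
  exact ⟨-5 * v + (n - 1) * w, by rw [QuaternionAlgebra.eq_coe_iff]; simp; ring⟩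

end OrderPlus

section Invariant

open Matrix QuaternionAlgebra

variable {n : ℕ}

structure IsCongrJForm (n : ℕ) (G : 𝓜 n) : Prop where
  isHermitian : G.IsHermitian
  zero_zero : ∃ k : ℤ, G 0 0 = ((2 * (11 * n - 1) * k : ℚ) : 𝓗 n)
  one_one : ∃ k : ℤ, G 1 1 = ((2 * (11 * n - 1) * k : ℚ) : 𝓗 n)
  zero_one : ∃ y ∈ orderPlus n, G 0 1 = ⟨0, 0, 1, 0⟩ + (2 * (11 * n - 1) : ℚ) • y

lemma isCongrJForm_jForm : IsCongrJForm n (jForm ⟨0, 0, 1, 0⟩) where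
  isHermitian := isHermitian_jForm (by ext <;> simp)
  zero_zero := ⟨0, by simp [jForm]⟩
  one_one := ⟨0, by simp [jForm]⟩
  zero_one := ⟨0, zero_mem _, by simp [jForm]⟩

lemma IsCongrJForm.cohnUnit_conj {G : 𝓜 n} (hG : IsCongrJForm n G) {α : 𝓗 n}
    (hα : α ∈ orderPlus n) :
    IsCongrJForm n ((CohnUnit α : 𝓜 n) * G * (CohnUnit α : 𝓜 n)ᴴ) := by
  obtain ⟨hH, ⟨k, hk⟩, ⟨k', hk'⟩, ⟨y, hy, hy'⟩⟩ := hG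
  have h10 : G 1 0 = star (G 0 1) := (hH.apply 1 0).symm
  refine ⟨isHermitian_mul_mul_conjTranspose _ hH, ?_, ?_, ?_⟩ <;>
    simp only [cohnUnit_mul_mul_conjTranspose, of_apply, cons_val', cons_val_zero, cons_val_one,
      empty_val', cons_val_fin_one]
  · obtain ⟨a, ha⟩ := exists_mul_star_eq_intCast hα
    obtain ⟨b, hb⟩ := exists_trace_mul_j_eq hα
    obtain ⟨c, hc⟩ := exists_trace_mul_eq_intCast hα hy
    have htr : α * G 0 1 + star (α * G 0 1) = α * ⟨0, 0, 1, 0⟩ + star (α * ⟨0, 0, 1, 0⟩) +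
        (2 * (11 * n - 1) : ℚ) • (α * y + star (α * y)) := by
      rw [hy', mul_add, mul_smul_comm, star_add, QuaternionAlgebra.star_smul, smul_add]
      abel
    refine ⟨k * a + b + c + k', ?_⟩
    rw [h10, add_assoc _ _ (star _ * _), ← star_mul, add_assoc, htr, hk, hk', hb, hc,
      mul_coe_eq_smul, smul_mul_assoc, ha, smul_coe, smul_coe, ← coe_add, ← coe_add, ← coe_add]
    congr 1
    push_cast
    ring
  · exact ⟨k, hk⟩
  · refine ⟨-(k • α) - star y,
      sub_mem (neg_mem (Submodule.smul_mem _ k hα)) (star_mem_orderPlus hy), ?_⟩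
    rw [h10, hy', hk]
    ext <;> simp <;> ring

lemma isCongrJForm_of_mem_cohnSubgroup {γ : (𝓜 n)ˣ} (hγ : γ ∈ CohnSubgroup n) :
    IsCongrJForm n ((γ : 𝓜 n) * jForm ⟨0, 0, 1, 0⟩ * (γ : 𝓜 n)ᴴ) := by
  have conj_mul (x y : (𝓜 n)ˣ) :
      ((x * y : (𝓜 n)ˣ) : 𝓜 n) * jForm ⟨0, 0, 1, 0⟩ * ((x * y : (𝓜 n)ˣ) : 𝓜 n)ᴴ =
        (x : 𝓜 n) * ((y : 𝓜 n) * jForm ⟨0, 0, 1, 0⟩ * (y : 𝓜 n)ᴴ) * (x : 𝓜 n)ᴴ := by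
    simp only [Units.val_mul, conjTranspose_mul, Matrix.mul_assoc]
  induction hγ using Subgroup.closure_induction_left with
  | one => simpa using isCongrJForm_jForm
  | mul_left x hx y _ ih =>
    obtain ⟨α, hα, rfl⟩ := hx
    rw [conj_mul]
    exact ih.cohnUnit_conj hα
  | inv_mul_cancel x hx y _ ih =>
    obtain ⟨α, hα, rfl⟩ := hx
    rw [cohnUnit_inv, mul_assoc _ (CohnUnit 0) y, mul_assoc (CohnUnit 0), conj_mul, conj_mul,
      conj_mul]
    exact ((ih.cohnUnit_conj (zero_mem _)).cohnUnit_conj (neg_mem hα)).cohnUnit_conj (zero_mem _)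

end Invariant

lemma le_abs_mul_two_mul_add_one {α : Type*} [Ring α] [LinearOrder α] [IsStrictOrderedRing α]
    (x : α) (m : ℤ) : x ≤ |x * (2 * m + 1)| := by
  have hodd : (1 : α) ≤ |(2 * m + 1 : α)| := by
    exact_mod_cast Int.one_le_abs (by omega : 2 * m + 1 ≠ 0)
  calc x ≤ |x| := le_abs_self x
    _ ≤ |x| * |(2 * m + 1 : α)| := le_mul_of_one_le_right (abs_nonneg x) hodd
    _ = |x * (2 * m + 1)| := (abs_mul _ _).symm

theorem forbidden_ball_neg11_general (n : ℕ)
    (γ : (Matrix (Fin 2) (Fin 2) ℍ[ℚ, -11, -11 * (11 * (n : ℚ) - 1)])ˣ)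
    (hγ : γ ∈ CohnSubgroup n)
    (a b c d : ℍ[ℚ, -11, -11 * (11 * (n : ℚ) - 1)])
    (ha : a = γ.1 0 0) (hb : b = γ.1 0 1) (hc : c = γ.1 1 0) (hd : d = γ.1 1 1)
    (j ρ : ℍ[ℚ, -11, -11 * (11 * (n : ℚ) - 1)])
    (hj : j = ⟨0, 0, 1, 0⟩) (hρ : ρ = ⟨0, -10, 1, 0⟩)
    (κ κ' ξ B : ℍ[ℚ, -11, -11 * (11 * (n : ℚ) - 1)])
    (hκ : κ = c * j * star d - d * j * star c)
    (hκ' : κ' = a * j * star b - b * j * star a)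
    (hξ : ξ = a * j * star d - b * j * star c)
    (hB : B = (2 : ℚ)⁻¹ •
      (-(22 * κ') - 66 * κ + (ρ * star ξ + star (ρ * star ξ)))) :
    ∃ q : ℚ, B = (q : ℍ[ℚ, -11, -11 * (11 * (n : ℚ) - 1)]) ∧
      (∃ m : ℤ, q = 11 * (11 * n - 1) + 22 * (11 * n - 1) * m) ∧
      11 * (11 * (n : ℚ) - 1) ≤ |q| := by
  subst ha hb hc hd hj hρ hκ hκ' hξ hB
  obtain ⟨-, ⟨k', hk'⟩, ⟨k, hk⟩, ⟨y, hy, hy'⟩⟩ := isCongrJForm_of_mem_cohnSubgroup hγ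
  simp only [mul_jForm_mul_conjTranspose_apply] at hk hk' hy'
  obtain ⟨m, hm⟩ := exists_trace_mul_star_j_add_smul_eq hy
  refine ⟨11 * (11 * n - 1) * (2 * (m - k' - 3 * k : ℤ) + 1), ?_,
    ⟨m - k' - 3 * k, by push_cast; ring⟩, le_abs_mul_two_mul_add_one _ _⟩
  rw [hk, hk', hy', hm]
  simp only [← QuaternionAlgebra.coe_ofNat, ← QuaternionAlgebra.coe_mul,
    ← QuaternionAlgebra.coe_neg, ← QuaternionAlgebra.coe_sub, ← QuaternionAlgebra.coe_add,
    QuaternionAlgebra.smul_coe]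
  congr 1
  push_cast
  ring

/-- The pairing of the forbidden ball with data `(22, 66, −10i + j)` against any sphere
`γ.S_j`, `γ ∈ 𝒲`, lies in `11(11n−1) + 22(11n−1)ℤ`; in particular its absolute value is
at least `11(11n−1)`. -/
theorem forbidden_ball_neg11 (n : ℕ) (hn : 1 ≤ n)
    (hfix : orderPlus n = {x ∈ order n | dag x = x})
    (γ : (Matrix (Fin 2) (Fin 2) ℍ[ℚ, -11, -11 * (11 * (n : ℚ) - 1)])ˣ)
    (hγ : γ ∈ CohnSubgroup n)
    (a b c d : ℍ[ℚ, -11, -11 * (11 * (n : ℚ) - 1)])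
    (ha : a = γ.1 0 0) (hb : b = γ.1 0 1) (hc : c = γ.1 1 0) (hd : d = γ.1 1 1)
    (j ρ : ℍ[ℚ, -11, -11 * (11 * (n : ℚ) - 1)])
    (hj : j = ⟨0, 0, 1, 0⟩) (hρ : ρ = ⟨0, -10, 1, 0⟩)
    (κ κ' ξ B : ℍ[ℚ, -11, -11 * (11 * (n : ℚ) - 1)])
    (hκ : κ = c * j * star d - d * j * star c)
    (hκ' : κ' = a * j * star b - b * j * star a)
    (hξ : ξ = a * j * star d - b * j * star c)
    (hB : B = (2 : ℚ)⁻¹ •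
      (-(22 * κ') - 66 * κ + (ρ * star ξ + star (ρ * star ξ)))) :
    ∃ q : ℚ, B = (q : ℍ[ℚ, -11, -11 * (11 * (n : ℚ) - 1)]) ∧
      (∃ m : ℤ, q = 11 * (11 * n - 1) + 22 * (11 * n - 1) * m) ∧
      11 * (11 * (n : ℚ) - 1) ≤ |q| :=
  forbidden_ball_neg11_general n γ hγ a b c d ha hb hc hd j ρ hj hρ κ κ' ξ B hκ hκ' hξ hB
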